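/- Let (φ, ψ, θ, P) be a classical solution of the thermodiffusive Bresse–Timoshenko system with Dirichlet boundary conditions. Then for every t ≥ 0 the energy satisfies the dissipation identity E(t) − E(0) = −κ ∫₀ᵗ ∫₀ᴸ θ_x²(x,s) dx ds − h ∫₀ᵗ ∫₀ᴸ P_x²(x,s) dx ds; in particular E is nonincreasing on [0,∞). -/

import Mathlib

open Real intervalIntegral

/-- Spatial partial derivative of a function of `(x, t)`. -/
noncomputable def pdx (f : ℝ → ℝ → ℝ) : ℝ → ℝ → ℝ := fun x t => deriv (fun y => f y t) x

/-- Temporal partial derivative of a function of `(x, t)`. -/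
noncomputable def pdt (f : ℝ → ℝ → ℝ) : ℝ → ℝ → ℝ := fun x t => deriv (fun s => f x s) t


abbrev Sm (f : ℝ → ℝ → ℝ) : Prop := ContDiff ℝ (⊤ : ℕ∞) (Function.uncurry f)

lemma sliceX_hasFDerivAt {f : ℝ → ℝ → ℝ} (hf : Sm f) (x t : ℝ) :
    HasDerivAt (fun y => f y t) (fderiv ℝ (Function.uncurry f) (x, t) (1, 0)) x := by
  have h1 : HasFDerivAt (fun y : ℝ => (y, t)) ((ContinuousLinearMap.id ℝ ℝ).prod 0) x :=
    (hasFDerivAt_id x).prodMk (hasFDerivAt_const t x)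
  have h2 := ((hf.differentiable (by simp) (x, t)).hasFDerivAt).comp x h1
  have := h2.hasDerivAt
  exact this

lemma sliceT_hasFDerivAt {f : ℝ → ℝ → ℝ} (hf : Sm f) (x t : ℝ) :
    HasDerivAt (fun s => f x s) (fderiv ℝ (Function.uncurry f) (x, t) (0, 1)) t := by
  have h1 : HasFDerivAt (fun s : ℝ => (x, s)) ((0 : ℝ →L[ℝ] ℝ).prod (ContinuousLinearMap.id ℝ ℝ)) t :=
    (hasFDerivAt_const x t).prodMk (hasFDerivAt_id t)
  have h2 := ((hf.differentiable (by simp) (x, t)).hasFDerivAt).comp t h1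
  have := h2.hasDerivAt
  exact this

lemma hasDerivAt_pdx {f : ℝ → ℝ → ℝ} (hf : Sm f) (x t : ℝ) :
    HasDerivAt (fun y => f y t) (pdx f x t) x :=
  (sliceX_hasFDerivAt hf x t).differentiableAt.hasDerivAt

lemma hasDerivAt_pdt {f : ℝ → ℝ → ℝ} (hf : Sm f) (x t : ℝ) :
    HasDerivAt (fun s => f x s) (pdt f x t) t :=
  (sliceT_hasFDerivAt hf x t).differentiableAt.hasDerivAt

lemma pdx_eq {f : ℝ → ℝ → ℝ} (hf : Sm f) (x t : ℝ) :
    pdx f x t = fderiv ℝ (Function.uncurry f) (x, t) (1, 0) :=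
  (sliceX_hasFDerivAt hf x t).deriv

lemma pdt_eq {f : ℝ → ℝ → ℝ} (hf : Sm f) (x t : ℝ) :
    pdt f x t = fderiv ℝ (Function.uncurry f) (x, t) (0, 1) :=
  (sliceT_hasFDerivAt hf x t).deriv

lemma sm_pdx {f : ℝ → ℝ → ℝ} (hf : Sm f) : Sm (pdx f) := by
  have h : Function.uncurry (pdx f) = fun p : ℝ × ℝ => fderiv ℝ (Function.uncurry f) p (1, 0) := by
    funext p
    cases p with
    | mk x t => exact pdx_eq hf x t
  have := (hf.fderiv_right (m := (⊤ : ℕ∞)) (by simp)).clm_apply (contDiff_const (c := ((1:ℝ),(0:ℝ))))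
  rwa [← h] at this

lemma sm_pdt {f : ℝ → ℝ → ℝ} (hf : Sm f) : Sm (pdt f) := by
  have h : Function.uncurry (pdt f) = fun p : ℝ × ℝ => fderiv ℝ (Function.uncurry f) p (0, 1) := by
    funext p
    cases p with
    | mk x t => exact pdt_eq hf x t
  have := (hf.fderiv_right (m := (⊤ : ℕ∞)) (by simp)).clm_apply (contDiff_const (c := ((0:ℝ),(1:ℝ))))
  rwa [← h] at this

lemma uncurry_pdx_eq {f : ℝ → ℝ → ℝ} (hf : Sm f) :
    Function.uncurry (pdx f) = fun p : ℝ × ℝ => fderiv ℝ (Function.uncurry f) p (1, 0) := by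
  funext p; cases p with | mk x t => exact pdx_eq hf x t

lemma uncurry_pdt_eq {f : ℝ → ℝ → ℝ} (hf : Sm f) :
    Function.uncurry (pdt f) = fun p : ℝ × ℝ => fderiv ℝ (Function.uncurry f) p (0, 1) := by
  funext p; cases p with | mk x t => exact pdt_eq hf x t

lemma pdt_pdx_comm {f : ℝ → ℝ → ℝ} (hf : Sm f) (x t : ℝ) :
    pdt (pdx f) x t = pdx (pdt f) x t := by
  set F := Function.uncurry f with hF
  have hdF : DifferentiableAt ℝ (fderiv ℝ F) (x, t) :=
    ((hf.fderiv_right (m := (⊤ : ℕ∞)) (by simp)).differentiable (by simp)) (x, t)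
  have key : ∀ v : ℝ × ℝ,
      fderiv ℝ (fun p : ℝ × ℝ => fderiv ℝ F p v) (x, t) =
        (fderiv ℝ (fderiv ℝ F) (x, t)).flip v := by
    intro v
    rw [fderiv_clm_apply hdF (differentiableAt_const v)]
    simp
  have h1 : pdt (pdx f) x t = fderiv ℝ (fderiv ℝ F) (x, t) (0, 1) (1, 0) := by
    rw [pdt_eq (sm_pdx hf) x t, uncurry_pdx_eq hf, key (1, 0)]
    rfl
  have h2 : pdx (pdt f) x t = fderiv ℝ (fderiv ℝ F) (x, t) (1, 0) (0, 1) := by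
    rw [pdx_eq (sm_pdt hf) x t, uncurry_pdt_eq hf, key (0, 1)]
    rfl
  rw [h1, h2]
  exact (hf.contDiffAt.isSymmSndFDerivAt (by rw [minSmoothness_of_isRCLikeNormedField]; exact WithTop.coe_le_coe.mpr (le_top : (2:ℕ∞) ≤ ⊤))) _ _

lemma sm_contX {f : ℝ → ℝ → ℝ} (hf : Sm f) (t : ℝ) : Continuous (fun x => f x t) :=
  hf.continuous.comp (continuous_id.prodMk continuous_const)

lemma hasDerivAt_paramInt {F : ℝ → ℝ → ℝ} (hF : Sm F) (a b t₀ : ℝ) :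
    HasDerivAt (fun t => ∫ x in a..b, F x t) (∫ x in a..b, pdt F x t₀) t₀ := by
  have hpdt : Sm (pdt F) := sm_pdt hF
  obtain ⟨C, hC⟩ := (IsCompact.exists_bound_of_continuousOn
    ((isCompact_uIcc (a := a) (b := b)).prod (isCompact_closedBall t₀ 1))
    hpdt.continuous.continuousOn)
  have main := intervalIntegral.hasDerivAt_integral_of_dominated_loc_of_deriv_le
    (F := fun t x => F x t) (F' := fun t x => pdt F x t) (x₀ := t₀) (a := a) (b := b)
    (μ := MeasureTheory.volume) (bound := fun _ => C) (s := Metric.ball t₀ 1) (Metric.ball_mem_nhds t₀ one_pos)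
    (Filter.Eventually.of_forall fun t => ((sm_contX hF t).aestronglyMeasurable))
    ((sm_contX hF t₀).intervalIntegrable a b)
    ((sm_contX hpdt t₀).aestronglyMeasurable)
    (Filter.Eventually.of_forall fun x hx t ht => by
      have : ((x, t) : ℝ × ℝ) ∈ Set.uIcc a b ×ˢ Metric.closedBall t₀ 1 :=
        ⟨Set.uIoc_subset_uIcc hx, Metric.ball_subset_closedBall ht⟩
      simpa using hC (x, t) this)
    (intervalIntegrable_const)
    (Filter.Eventually.of_forall fun x _ t _ => hasDerivAt_pdt hF x t)
  exact main.2

lemma pdt_eq_zero_of_pos {f : ℝ → ℝ → ℝ} {z t : ℝ} (ht : 0 < t)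
    (h : ∀ s, 0 < s → f z s = 0) : pdt f z t = 0 := by
  have hev : (fun s => f z s) =ᶠ[nhds t] (fun _ => (0:ℝ)) := by
    filter_upwards [Ioi_mem_nhds ht] with s hs
    exact h s hs
  show deriv (fun s => f z s) t = 0
  rw [hev.deriv_eq, deriv_const]

/-- Classical solution of the thermodiffusive Bresse–Timoshenko system with
Dirichlet boundary conditions on `[0, L] × [0, ∞)`. -/
def IsSolution (L ρ1 ρ2 κ α ξ1 ξ2 c r h d : ℝ) (φ ψ θ P : ℝ → ℝ → ℝ) : Prop :=
  ContDiff ℝ (⊤ : ℕ∞) (Function.uncurry φ) ∧ ContDiff ℝ (⊤ : ℕ∞) (Function.uncurry ψ) ∧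
  ContDiff ℝ (⊤ : ℕ∞) (Function.uncurry θ) ∧ ContDiff ℝ (⊤ : ℕ∞) (Function.uncurry P) ∧
  (∀ x ∈ Set.Ioo (0:ℝ) L, ∀ t > (0:ℝ),
    ρ1 * pdt (pdt φ) x t - κ * pdx (fun y s => pdx φ y s + ψ y s) x t = 0 ∧
    -(ρ2 * pdx (pdt (pdt φ)) x t) - α * pdx (pdx ψ) x t + κ * (pdx φ x t + ψ x t)
        - ξ1 * pdx θ x t - ξ2 * pdx P x t = 0 ∧
    c * pdt θ x t + d * pdt P x t - κ * pdx (pdx θ) x t - ξ1 * pdx (pdt ψ) x t = 0 ∧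
    d * pdt θ x t + r * pdt P x t - h * pdx (pdx P) x t - ξ2 * pdx (pdt ψ) x t = 0) ∧
  (∀ t ≥ (0:ℝ),
    φ 0 t = 0 ∧ φ L t = 0 ∧ ψ 0 t = 0 ∧ ψ L t = 0 ∧
    θ 0 t = 0 ∧ θ L t = 0 ∧ P 0 t = 0 ∧ P L t = 0)

/-- The energy functional. -/
noncomputable def energy (L ρ1 ρ2 κ α c r d : ℝ) (φ ψ θ P : ℝ → ℝ → ℝ) (t : ℝ) : ℝ :=
  (1/2) * ∫ x in (0:ℝ)..L,
    (ρ1 * (pdt φ x t) ^ 2 + (ρ1 * ρ2 / κ) * (pdt (pdt φ) x t) ^ 2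
      + ρ2 * (pdx (pdt φ) x t) ^ 2 + κ * (pdx φ x t + ψ x t) ^ 2 + α * (pdx ψ x t) ^ 2
      + c * (θ x t) ^ 2 + r * (P x t) ^ 2 + 2 * d * (θ x t) * (P x t))

/-- Energy dissipation identity; in particular the energy is nonincreasing. -/
theorem energy_dissipation (L ρ1 ρ2 κ α ξ1 ξ2 c r h d : ℝ)
    (hL : 0 < L) (hρ1 : 0 < ρ1) (hρ2 : 0 < ρ2) (hκ : 0 < κ) (hα : 0 < α)
    (hξ1 : 0 < ξ1) (hξ2 : 0 < ξ2) (hc : 0 < c) (hr : 0 < r) (hh : 0 < h)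
    (hcrd : c * r - d ^ 2 > 0)
    (φ ψ θ P : ℝ → ℝ → ℝ)
    (hsol : IsSolution L ρ1 ρ2 κ α ξ1 ξ2 c r h d φ ψ θ P) :
    (∀ t ≥ (0:ℝ),
      energy L ρ1 ρ2 κ α c r d φ ψ θ P t - energy L ρ1 ρ2 κ α c r d φ ψ θ P 0 =
        -(κ * ∫ s in (0:ℝ)..t, ∫ x in (0:ℝ)..L, (pdx θ x s) ^ 2)
          - h * ∫ s in (0:ℝ)..t, ∫ x in (0:ℝ)..L, (pdx P x s) ^ 2) ∧
    (∀ s t : ℝ, 0 ≤ s → s ≤ t →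
      energy L ρ1 ρ2 κ α c r d φ ψ θ P t ≤ energy L ρ1 ρ2 κ α c r d φ ψ θ P s) := by

  obtain ⟨hφ, hψ, hθ, hP, heq, hbc⟩ := hsol
  have hφt : Sm (pdt φ) := sm_pdt hφ
  have hφtt : Sm (pdt (pdt φ)) := sm_pdt hφt
  have hφttt : Sm (pdt (pdt (pdt φ))) := sm_pdt hφtt
  have hφx : Sm (pdx φ) := sm_pdx hφ
  have hφtx : Sm (pdx (pdt φ)) := sm_pdx hφt
  have hφttx : Sm (pdx (pdt (pdt φ))) := sm_pdx hφtt
  have hφxx : Sm (pdx (pdx φ)) := sm_pdx hφx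
  have hφtxx : Sm (pdx (pdx (pdt φ))) := sm_pdx hφtx
  have hψt : Sm (pdt ψ) := sm_pdt hψ
  have hψx : Sm (pdx ψ) := sm_pdx hψ
  have hψtx : Sm (pdx (pdt ψ)) := sm_pdx hψt
  have hψxx : Sm (pdx (pdx ψ)) := sm_pdx hψx
  have hθt : Sm (pdt θ) := sm_pdt hθ
  have hθx : Sm (pdx θ) := sm_pdx hθ
  have hθxx : Sm (pdx (pdx θ)) := sm_pdx hθx
  have hPt : Sm (pdt P) := sm_pdt hP
  have hPx : Sm (pdx P) := sm_pdx hP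
  have hPxx : Sm (pdx (pdx P)) := sm_pdx hPx

  -- smoothness of the energy integrand
  have hSmF : Sm (fun x t => ρ1 * (pdt φ x t) ^ 2 + (ρ1 * ρ2 / κ) * (pdt (pdt φ) x t) ^ 2 + ρ2 * (pdx (pdt φ) x t) ^ 2 + κ * (pdx φ x t + ψ x t) ^ 2 + α * (pdx ψ x t) ^ 2 + c * (θ x t) ^ 2 + r * (P x t) ^ 2 + 2 * d * (θ x t) * (P x t)) := by
    show ContDiff ℝ (⊤ : ℕ∞) (fun p : ℝ × ℝ => ρ1 * (pdt φ p.1 p.2) ^ 2 + (ρ1 * ρ2 / κ) * (pdt (pdt φ) p.1 p.2) ^ 2 + ρ2 * (pdx (pdt φ) p.1 p.2) ^ 2 + κ * (pdx φ p.1 p.2 + ψ p.1 p.2) ^ 2 + α * (pdx ψ p.1 p.2) ^ 2 + c * (θ p.1 p.2) ^ 2 + r * (P p.1 p.2) ^ 2 + 2 * d * (θ p.1 p.2) * (P p.1 p.2))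
    have u0 : ContDiff ℝ (⊤ : ℕ∞) (fun p : ℝ × ℝ => φ p.1 p.2) := hφ
    have u1 : ContDiff ℝ (⊤ : ℕ∞) (fun p : ℝ × ℝ => ψ p.1 p.2) := hψ
    have u2 : ContDiff ℝ (⊤ : ℕ∞) (fun p : ℝ × ℝ => θ p.1 p.2) := hθ
    have u3 : ContDiff ℝ (⊤ : ℕ∞) (fun p : ℝ × ℝ => P p.1 p.2) := hP
    have u4 : ContDiff ℝ (⊤ : ℕ∞) (fun p : ℝ × ℝ => pdt φ p.1 p.2) := hφt
    have u5 : ContDiff ℝ (⊤ : ℕ∞) (fun p : ℝ × ℝ => pdt (pdt φ) p.1 p.2) := hφtt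
    have u6 : ContDiff ℝ (⊤ : ℕ∞) (fun p : ℝ × ℝ => pdt (pdt (pdt φ)) p.1 p.2) := hφttt
    have u7 : ContDiff ℝ (⊤ : ℕ∞) (fun p : ℝ × ℝ => pdx φ p.1 p.2) := hφx
    have u8 : ContDiff ℝ (⊤ : ℕ∞) (fun p : ℝ × ℝ => pdx (pdt φ) p.1 p.2) := hφtx
    have u9 : ContDiff ℝ (⊤ : ℕ∞) (fun p : ℝ × ℝ => pdx (pdt (pdt φ)) p.1 p.2) := hφttx
    have u10 : ContDiff ℝ (⊤ : ℕ∞) (fun p : ℝ × ℝ => pdx (pdx φ) p.1 p.2) := hφxx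
    have u11 : ContDiff ℝ (⊤ : ℕ∞) (fun p : ℝ × ℝ => pdx (pdx (pdt φ)) p.1 p.2) := hφtxx
    have u12 : ContDiff ℝ (⊤ : ℕ∞) (fun p : ℝ × ℝ => pdt ψ p.1 p.2) := hψt
    have u13 : ContDiff ℝ (⊤ : ℕ∞) (fun p : ℝ × ℝ => pdx ψ p.1 p.2) := hψx
    have u14 : ContDiff ℝ (⊤ : ℕ∞) (fun p : ℝ × ℝ => pdx (pdt ψ) p.1 p.2) := hψtx
    have u15 : ContDiff ℝ (⊤ : ℕ∞) (fun p : ℝ × ℝ => pdx (pdx ψ) p.1 p.2) := hψxx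
    have u16 : ContDiff ℝ (⊤ : ℕ∞) (fun p : ℝ × ℝ => pdt θ p.1 p.2) := hθt
    have u17 : ContDiff ℝ (⊤ : ℕ∞) (fun p : ℝ × ℝ => pdx θ p.1 p.2) := hθx
    have u18 : ContDiff ℝ (⊤ : ℕ∞) (fun p : ℝ × ℝ => pdx (pdx θ) p.1 p.2) := hθxx
    have u19 : ContDiff ℝ (⊤ : ℕ∞) (fun p : ℝ × ℝ => pdt P p.1 p.2) := hPt
    have u20 : ContDiff ℝ (⊤ : ℕ∞) (fun p : ℝ × ℝ => pdx P p.1 p.2) := hPx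
    have u21 : ContDiff ℝ (⊤ : ℕ∞) (fun p : ℝ × ℝ => pdx (pdx P) p.1 p.2) := hPxx
    fun_prop
  -- time derivative of the integrand, pointwise
  have hFt : ∀ x t : ℝ, HasDerivAt (fun s => ρ1 * (pdt φ x s) ^ 2 + (ρ1 * ρ2 / κ) * (pdt (pdt φ) x s) ^ 2 + ρ2 * (pdx (pdt φ) x s) ^ 2 + κ * (pdx φ x s + ψ x s) ^ 2 + α * (pdx ψ x s) ^ 2 + c * (θ x s) ^ 2 + r * (P x s) ^ 2 + 2 * d * (θ x s) * (P x s)) (2 * (ρ1 * pdt φ x t * pdt (pdt φ) x t + ρ1 * ρ2 / κ * pdt (pdt φ) x t * pdt (pdt (pdt φ)) x t + ρ2 * pdx (pdt φ) x t * pdx (pdt (pdt φ)) x t + κ * (pdx φ x t + ψ x t) * (pdx (pdt φ) x t + pdt ψ x t) + α * pdx ψ x t * pdx (pdt ψ) x t + c * θ x t * pdt θ x t + r * P x t * pdt P x t + d * pdt θ x t * P x t + d * θ x t * pdt P x t)) t := by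
    intro x t
    have hD1 := hasDerivAt_pdt hφt x t
    have hD2 := hasDerivAt_pdt hφtt x t
    have hD3 : HasDerivAt (fun s => pdx (pdt φ) x s) (pdx (pdt (pdt φ)) x t) t := by
      have h0 := hasDerivAt_pdt hφtx x t
      rwa [pdt_pdx_comm hφt x t] at h0
    have hD4 : HasDerivAt (fun s => pdx φ x s + ψ x s) (pdx (pdt φ) x t + pdt ψ x t) t := by
      have h0 := (hasDerivAt_pdt hφx x t).add (hasDerivAt_pdt hψ x t)
      rwa [pdt_pdx_comm hφ x t] at h0
    have hD5 : HasDerivAt (fun s => pdx ψ x s) (pdx (pdt ψ) x t) t := by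
      have h0 := hasDerivAt_pdt hψx x t
      rwa [pdt_pdx_comm hψ x t] at h0
    have hD6 := hasDerivAt_pdt hθ x t
    have hD7 := hasDerivAt_pdt hP x t
    have t1 := (hD1.pow 2).const_mul ρ1
    have t2 := (hD2.pow 2).const_mul (ρ1 * ρ2 / κ)
    have t3 := (hD3.pow 2).const_mul ρ2
    have t4 := (hD4.pow 2).const_mul κ
    have t5 := (hD5.pow 2).const_mul α
    have t6 := (hD6.pow 2).const_mul c
    have t7 := (hD7.pow 2).const_mul r
    have t8 := (hD6.const_mul (2 * d)).mul hD7
    have hraw := ((((((t1.add t2).add t3).add t4).add t5).add t6).add t7).add t8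
    convert hraw using 1
    · rfl
    · rfl
    · rfl
    simp only [Pi.add_apply, Nat.cast_ofNat, Nat.reduceSub, pow_one]
    ring
  have hpdtF : ∀ x t : ℝ, pdt (fun x t => ρ1 * (pdt φ x t) ^ 2 + (ρ1 * ρ2 / κ) * (pdt (pdt φ) x t) ^ 2 + ρ2 * (pdx (pdt φ) x t) ^ 2 + κ * (pdx φ x t + ψ x t) ^ 2 + α * (pdx ψ x t) ^ 2 + c * (θ x t) ^ 2 + r * (P x t) ^ 2 + 2 * d * (θ x t) * (P x t)) x t = 2 * (ρ1 * pdt φ x t * pdt (pdt φ) x t + ρ1 * ρ2 / κ * pdt (pdt φ) x t * pdt (pdt (pdt φ)) x t + ρ2 * pdx (pdt φ) x t * pdx (pdt (pdt φ)) x t + κ * (pdx φ x t + ψ x t) * (pdx (pdt φ) x t + pdt ψ x t) + α * pdx ψ x t * pdx (pdt ψ) x t + c * θ x t * pdt θ x t + r * P x t * pdt P x t + d * pdt θ x t * P x t + d * θ x t * pdt P x t) := fun x t => (hFt x t).deriv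
  -- derivative of energy, arbitrary time
  have hEd : ∀ t : ℝ, HasDerivAt (energy L ρ1 ρ2 κ α c r d φ ψ θ P)
      ((1/2) * ∫ x in (0:ℝ)..L, pdt (fun x t => ρ1 * (pdt φ x t) ^ 2 + (ρ1 * ρ2 / κ) * (pdt (pdt φ) x t) ^ 2 + ρ2 * (pdx (pdt φ) x t) ^ 2 + κ * (pdx φ x t + ψ x t) ^ 2 + α * (pdx ψ x t) ^ 2 + c * (θ x t) ^ 2 + r * (P x t) ^ 2 + 2 * d * (θ x t) * (P x t)) x t) t := by
    intro t
    exact (hasDerivAt_paramInt hSmF 0 L t).const_mul (1/2)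
  -- derivative of energy at positive time
  have hEd' : ∀ t : ℝ, 0 < t → HasDerivAt (energy L ρ1 ρ2 κ α c r d φ ψ θ P)
      (-(κ * ∫ x in (0:ℝ)..L, (pdx θ x t) ^ 2) - h * ∫ x in (0:ℝ)..L, (pdx P x t) ^ 2) t := by
    intro t ht
    have h0 := hEd t
    have c0 : Continuous (fun x => φ x t) := sm_contX hφ t
    have c1 : Continuous (fun x => ψ x t) := sm_contX hψ t
    have c2 : Continuous (fun x => θ x t) := sm_contX hθ t
    have c3 : Continuous (fun x => P x t) := sm_contX hP t
    have c4 : Continuous (fun x => pdt φ x t) := sm_contX hφt t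
    have c5 : Continuous (fun x => pdt (pdt φ) x t) := sm_contX hφtt t
    have c6 : Continuous (fun x => pdt (pdt (pdt φ)) x t) := sm_contX hφttt t
    have c7 : Continuous (fun x => pdx φ x t) := sm_contX hφx t
    have c8 : Continuous (fun x => pdx (pdt φ) x t) := sm_contX hφtx t
    have c9 : Continuous (fun x => pdx (pdt (pdt φ)) x t) := sm_contX hφttx t
    have c10 : Continuous (fun x => pdx (pdx φ) x t) := sm_contX hφxx t
    have c11 : Continuous (fun x => pdx (pdx (pdt φ)) x t) := sm_contX hφtxx t
    have c12 : Continuous (fun x => pdt ψ x t) := sm_contX hψt t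
    have c13 : Continuous (fun x => pdx ψ x t) := sm_contX hψx t
    have c14 : Continuous (fun x => pdx (pdt ψ) x t) := sm_contX hψtx t
    have c15 : Continuous (fun x => pdx (pdx ψ) x t) := sm_contX hψxx t
    have c16 : Continuous (fun x => pdt θ x t) := sm_contX hθt t
    have c17 : Continuous (fun x => pdx θ x t) := sm_contX hθx t
    have c18 : Continuous (fun x => pdx (pdx θ) x t) := sm_contX hθxx t
    have c19 : Continuous (fun x => pdt P x t) := sm_contX hPt t
    have c20 : Continuous (fun x => pdx P x t) := sm_contX hPx t
    have c21 : Continuous (fun x => pdx (pdx P) x t) := sm_contX hPxx t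

    have hDBc : Continuous (fun x => κ * pdx (pdt φ) x t * (pdx φ x t + ψ x t) + κ * pdt φ x t * (pdx (pdx φ) x t + pdx ψ x t) + ρ2 * pdx (pdt (pdt φ)) x t * (pdx (pdt φ) x t + pdt ψ x t) + ρ2 * pdt (pdt φ) x t * (pdx (pdx (pdt φ)) x t + pdx (pdt ψ) x t) + α * pdx (pdt ψ) x t * pdx ψ x t + α * pdt ψ x t * pdx (pdx ψ) x t + ξ1 * pdx (pdt ψ) x t * θ x t + ξ1 * pdt ψ x t * pdx θ x t + ξ2 * pdx (pdt ψ) x t * P x t + ξ2 * pdt ψ x t * pdx P x t + κ * pdx θ x t * pdx θ x t + κ * θ x t * pdx (pdx θ) x t + h * pdx P x t * pdx P x t + h * P x t * pdx (pdx P) x t) := by fun_prop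
    have hθxc : Continuous (fun x => (pdx θ x t) ^ 2) := by fun_prop
    have hPxc : Continuous (fun x => (pdx P x t) ^ 2) := by fun_prop
    have hDBint : IntervalIntegrable (fun x => κ * pdx (pdt φ) x t * (pdx φ x t + ψ x t) + κ * pdt φ x t * (pdx (pdx φ) x t + pdx ψ x t) + ρ2 * pdx (pdt (pdt φ)) x t * (pdx (pdt φ) x t + pdt ψ x t) + ρ2 * pdt (pdt φ) x t * (pdx (pdx (pdt φ)) x t + pdx (pdt ψ) x t) + α * pdx (pdt ψ) x t * pdx ψ x t + α * pdt ψ x t * pdx (pdx ψ) x t + ξ1 * pdx (pdt ψ) x t * θ x t + ξ1 * pdt ψ x t * pdx θ x t + ξ2 * pdx (pdt ψ) x t * P x t + ξ2 * pdt ψ x t * pdx P x t + κ * pdx θ x t * pdx θ x t + κ * θ x t * pdx (pdx θ) x t + h * pdx P x t * pdx P x t + h * P x t * pdx (pdx P) x t) MeasureTheory.volume 0 L :=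
      hDBc.intervalIntegrable 0 L
    have hθxint : IntervalIntegrable (fun x => (pdx θ x t) ^ 2) MeasureTheory.volume 0 L :=
      hθxc.intervalIntegrable 0 L
    have hPxint : IntervalIntegrable (fun x => (pdx P x t) ^ 2) MeasureTheory.volume 0 L :=
      hPxc.intervalIntegrable 0 L
    -- spatial derivative of the flux B
    have hDBd : ∀ x : ℝ, HasDerivAt (fun y => κ * pdt φ y t * (pdx φ y t + ψ y t) + ρ2 * pdt (pdt φ) y t * (pdx (pdt φ) y t + pdt ψ y t) + α * pdt ψ y t * pdx ψ y t + ξ1 * pdt ψ y t * θ y t + ξ2 * pdt ψ y t * P y t + κ * θ y t * pdx θ y t + h * P y t * pdx P y t) (κ * pdx (pdt φ) x t * (pdx φ x t + ψ x t) + κ * pdt φ x t * (pdx (pdx φ) x t + pdx ψ x t) + ρ2 * pdx (pdt (pdt φ)) x t * (pdx (pdt φ) x t + pdt ψ x t) + ρ2 * pdt (pdt φ) x t * (pdx (pdx (pdt φ)) x t + pdx (pdt ψ) x t) + α * pdx (pdt ψ) x t * pdx ψ x t + α * pdt ψ x t * pdx (pdx ψ) x t + ξ1 * pdx (pdt ψ)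 x t * θ x t + ξ1 * pdt ψ x t * pdx θ x t + ξ2 * pdx (pdt ψ) x t * P x t + ξ2 * pdt ψ x t * pdx P x t + κ * pdx θ x t * pdx θ x t + κ * θ x t * pdx (pdx θ) x t + h * pdx P x t * pdx P x t + h * P x t * pdx (pdx P) x t) x := by
      intro x
      have kφt := hasDerivAt_pdx hφt x t
      have kφtt := hasDerivAt_pdx hφtt x t
      have kφx := hasDerivAt_pdx hφx x t
      have kψ := hasDerivAt_pdx hψ x t
      have kφtx := hasDerivAt_pdx hφtx x t
      have kψt := hasDerivAt_pdx hψt x t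
      have kψx := hasDerivAt_pdx hψx x t
      have kθ := hasDerivAt_pdx hθ x t
      have kθx := hasDerivAt_pdx hθx x t
      have kP := hasDerivAt_pdx hP x t
      have kPx := hasDerivAt_pdx hPx x t
      have t1 := (kφt.const_mul κ).mul (kφx.add kψ)
      have t2 := (kφtt.const_mul ρ2).mul (kφtx.add kψt)
      have t3 := (kψt.const_mul α).mul kψx
      have t4 := (kψt.const_mul ξ1).mul kθ
      have t5 := (kψt.const_mul ξ2).mul kP
      have t6 := (kθ.const_mul κ).mul kθx
      have t7 := (kP.const_mul h).mul kPx
      have hraw := (((((t1.add t2).add t3).add t4).add t5).add t6).add t7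
      convert hraw using 1
      · rfl
      · rfl
      · rfl
      simp only [Pi.add_apply]
      ring
    -- boundary values
    have hθ0 : θ 0 t = 0 := (hbc t ht.le).2.2.2.2.1
    have hθL : θ L t = 0 := (hbc t ht.le).2.2.2.2.2.1
    have hP0 : P 0 t = 0 := (hbc t ht.le).2.2.2.2.2.2.1
    have hPL : P L t = 0 := (hbc t ht.le).2.2.2.2.2.2.2
    have hφt0 : pdt φ 0 t = 0 := pdt_eq_zero_of_pos ht (fun s hs => (hbc s hs.le).1)
    have hφtL : pdt φ L t = 0 := pdt_eq_zero_of_pos ht (fun s hs => (hbc s hs.le).2.1)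
    have hψt0 : pdt ψ 0 t = 0 := pdt_eq_zero_of_pos ht (fun s hs => (hbc s hs.le).2.2.1)
    have hψtL : pdt ψ L t = 0 := pdt_eq_zero_of_pos ht (fun s hs => (hbc s hs.le).2.2.2.1)
    have hφtt0 : pdt (pdt φ) 0 t = 0 :=
      pdt_eq_zero_of_pos ht (fun s hs => pdt_eq_zero_of_pos hs (fun u hu => (hbc u hu.le).1))
    have hφttL : pdt (pdt φ) L t = 0 :=
      pdt_eq_zero_of_pos ht (fun s hs => pdt_eq_zero_of_pos hs (fun u hu => (hbc u hu.le).2.1))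
    have hB0 : (κ * pdt φ 0 t * (pdx φ 0 t + ψ 0 t) + ρ2 * pdt (pdt φ) 0 t * (pdx (pdt φ) 0 t + pdt ψ 0 t) + α * pdt ψ 0 t * pdx ψ 0 t + ξ1 * pdt ψ 0 t * θ 0 t + ξ2 * pdt ψ 0 t * P 0 t + κ * θ 0 t * pdx θ 0 t + h * P 0 t * pdx P 0 t) = 0 := by
      rw [hφt0, hφtt0, hψt0, hθ0, hP0]; ring
    have hBL : (κ * pdt φ L t * (pdx φ L t + ψ L t) + ρ2 * pdt (pdt φ) L t * (pdx (pdt φ) L t + pdt ψ L t) + α * pdt ψ L t * pdx ψ L t + ξ1 * pdt ψ L t * θ L t + ξ2 * pdt ψ L t * P L t + κ * θ L t * pdx θ L t + h * P L t * pdx P L t) = 0 := by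
      rw [hφtL, hφttL, hψtL, hθL, hPL]; ring
    have hBeval : (∫ x in (0:ℝ)..L, (κ * pdx (pdt φ) x t * (pdx φ x t + ψ x t) + κ * pdt φ x t * (pdx (pdx φ) x t + pdx ψ x t) + ρ2 * pdx (pdt (pdt φ)) x t * (pdx (pdt φ) x t + pdt ψ x t) + ρ2 * pdt (pdt φ) x t * (pdx (pdx (pdt φ)) x t + pdx (pdt ψ) x t) + α * pdx (pdt ψ) x t * pdx ψ x t + α * pdt ψ x t * pdx (pdx ψ) x t + ξ1 * pdx (pdt ψ) x t * θ x t + ξ1 * pdt ψ x t * pdx θ x t + ξ2 * pdx (pdt ψ) x t * P x t + ξ2 * pdt ψ x t * pdx P x t + κ * pdx θ x t * pdx θ x t + κ * θ x t * pdx (pdx θ) x t + h * pdx P x t * pdx P x t + h * P x t * pdx (pdx P) x t)) = 0 := by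
      rw [intervalIntegral.integral_eq_sub_of_hasDerivAt (fun x _ => hDBd x) hDBint]
      show (κ * pdt φ L t * (pdx φ L t + ψ L t) + ρ2 * pdt (pdt φ) L t * (pdx (pdt φ) L t + pdt ψ L t) + α * pdt ψ L t * pdx ψ L t + ξ1 * pdt ψ L t * θ L t + ξ2 * pdt ψ L t * P L t + κ * θ L t * pdx θ L t + h * P L t * pdx P L t) - (κ * pdt φ 0 t * (pdx φ 0 t + ψ 0 t) + ρ2 * pdt (pdt φ) 0 t * (pdx (pdt φ) 0 t + pdt ψ 0 t) + α * pdt ψ 0 t * pdx ψ 0 t + ξ1 * pdt ψ 0 t * θ 0 t + ξ2 * pdt ψ 0 t * P 0 t + κ * θ 0 t * pdx θ 0 t + h * P 0 t * pdx P 0 t) = 0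
      rw [hB0, hBL]; ring
    -- the pointwise energy identity in the interior
    have hpoint : ∀ x ∈ Set.Ioo (0:ℝ) L,
        2 * (ρ1 * pdt φ x t * pdt (pdt φ) x t + ρ1 * ρ2 / κ * pdt (pdt φ) x t * pdt (pdt (pdt φ)) x t + ρ2 * pdx (pdt φ) x t * pdx (pdt (pdt φ)) x t + κ * (pdx φ x t + ψ x t) * (pdx (pdt φ) x t + pdt ψ x t) + α * pdx ψ x t * pdx (pdt ψ) x t + c * θ x t * pdt θ x t + r * P x t * pdt P x t + d * pdt θ x t * P x t + d * θ x t * pdt P x t) = 2 * (κ * pdx (pdt φ) x t * (pdx φ x t + ψ x t) + κ * pdt φ x t * (pdx (pdx φ) x t + pdx ψ x t) + ρ2 * pdx (pdt (pdt φ)) x t * (pdx (pdt φ) x t + pdt ψ x t) + ρ2 * pdt (pdt φ) x t * (pdx (pdx (pdt φ)) x t + pdx (pdt ψ) x t) + α * pdx (pdt ψ) x t * pdx ψ x t + α * pdt ψ x t * pdx (pdx ψ) x t + ξ1 * pdx (pdt ψ) x t * θ x t + ξ1 * pdt ψ x t * pdx θ x t + ξ2 * pdx (pdt ψ) x t * P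 x t + ξ2 * pdt ψ x t * pdx P x t + κ * pdx θ x t * pdx θ x t + κ * θ x t * pdx (pdx θ) x t + h * pdx P x t * pdx P x t + h * P x t * pdx (pdx P) x t) - 2 * κ * (pdx θ x t) ^ 2 - 2 * h * (pdx P x t) ^ 2 := by
      intro x hx
      obtain ⟨e1, e2, e3, e4⟩ := heq x hx t ht
      have hsum : pdx (fun y s => pdx φ y s + ψ y s) x t = pdx (pdx φ) x t + pdx ψ x t :=
        ((hasDerivAt_pdx hφx x t).add (hasDerivAt_pdx hψ x t)).deriv
      rw [hsum] at e1
      have hcommφ : pdt (pdx φ) = pdx (pdt φ) :=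
        funext fun a' => funext fun b' => pdt_pdx_comm hφ a' b'
      have hcommψ : pdt (pdx ψ) = pdx (pdt ψ) :=
        funext fun a' => funext fun b' => pdt_pdx_comm hψ a' b'
      have h1' : ∀ s, 0 < s → ρ1 * pdt (pdt φ) x s = κ * (pdx (pdx φ) x s + pdx ψ x s) := by
        intro s hs
        obtain ⟨f1, _, _, _⟩ := heq x hx s hs
        have hsum' : pdx (fun y s' => pdx φ y s' + ψ y s') x s = pdx (pdx φ) x s + pdx ψ x s :=
          ((hasDerivAt_pdx hφx x s).add (hasDerivAt_pdx hψ x s)).deriv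
        rw [hsum'] at f1
        linarith
      have hev : (fun s => ρ1 * pdt (pdt φ) x s) =ᶠ[nhds t]
          (fun s => κ * (pdx (pdx φ) x s + pdx ψ x s)) := by
        filter_upwards [Ioi_mem_nhds ht] with s hs
        exact h1' s hs
      have hdL : HasDerivAt (fun s => ρ1 * pdt (pdt φ) x s) (ρ1 * pdt (pdt (pdt φ)) x t) t :=
        (hasDerivAt_pdt hφtt x t).const_mul ρ1
      have hdR : HasDerivAt (fun s => κ * (pdx (pdx φ) x s + pdx ψ x s))
          (κ * (pdx (pdx (pdt φ)) x t + pdx (pdt ψ) x t)) t := by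
        have h0' := ((hasDerivAt_pdt hφxx x t).add (hasDerivAt_pdt hψx x t)).const_mul κ
        rwa [pdt_pdx_comm hφx x t, pdt_pdx_comm hψ x t, hcommφ] at h0'
      have e1t : ρ1 * pdt (pdt (pdt φ)) x t = κ * (pdx (pdx (pdt φ)) x t + pdx (pdt ψ) x t) := by
        have hde := hev.deriv_eq
        rw [hdL.deriv, hdR.deriv] at hde
        exact hde
      have e1t2 : ρ1 * ρ2 / κ * pdt (pdt (pdt φ)) x t
          = ρ2 * (pdx (pdx (pdt φ)) x t + pdx (pdt ψ) x t) := by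
        rw [div_mul_eq_mul_div, div_eq_iff hκ.ne']
        linear_combination ρ2 * e1t
      linear_combination (2 * pdt φ x t) * e1 + (2 * pdt (pdt φ) x t) * e1t2
        + (2 * pdt ψ x t) * e2 + (2 * θ x t) * e3 + (2 * P x t) * e4
    -- assemble the value of the derivative
    have hLne : ∀ᵐ x : ℝ ∂MeasureTheory.volume, x ≠ L := by
      rw [MeasureTheory.ae_iff]
      simp only [ne_eq, not_not, Set.setOf_eq_eq_singleton]
      exact Real.volume_singleton
    have s1 : (∫ x in (0:ℝ)..L, pdt (fun x t => ρ1 * (pdt φ x t) ^ 2 + (ρ1 * ρ2 / κ) * (pdt (pdt φ) x t) ^ 2 + ρ2 * (pdx (pdt φ) x t) ^ 2 + κ * (pdx φ x t + ψ x t) ^ 2 + α * (pdx ψ x t) ^ 2 + c * (θ x t) ^ 2 + r * (P x t) ^ 2 + 2 * d * (θ x t) * (P x t)) x t)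
        = ∫ x in (0:ℝ)..L, (2 * (ρ1 * pdt φ x t * pdt (pdt φ) x t + ρ1 * ρ2 / κ * pdt (pdt φ) x t * pdt (pdt (pdt φ)) x t + ρ2 * pdx (pdt φ) x t * pdx (pdt (pdt φ)) x t + κ * (pdx φ x t + ψ x t) * (pdx (pdt φ) x t + pdt ψ x t) + α * pdx ψ x t * pdx (pdt ψ) x t + c * θ x t * pdt θ x t + r * P x t * pdt P x t + d * pdt θ x t * P x t + d * θ x t * pdt P x t)) := by
      apply intervalIntegral.integral_congr
      intro x _
      exact hpdtF x t
    have s2 : (∫ x in (0:ℝ)..L, (2 * (ρ1 * pdt φ x t * pdt (pdt φ) x t + ρ1 * ρ2 / κ * pdt (pdt φ) x t * pdt (pdt (pdt φ)) x t + ρ2 * pdx (pdt φ) x t * pdx (pdt (pdt φ)) x t + κ * (pdx φ x t + ψ x t) * (pdx (pdt φ) x t + pdt ψ x t) + α * pdx ψ x t * pdx (pdt ψ) x t + c * θ x t * pdt θ x t + r * P x t * pdt P x t + d * pdt θ x t * P x t + d * θ x t * pdt P x t)))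
        = ∫ x in (0:ℝ)..L, (2 * (κ * pdx (pdt φ) x t * (pdx φ x t + ψ x t) + κ * pdt φ x t * (pdx (pdx φ) x t + pdx ψ x t) + ρ2 * pdx (pdt (pdt φ)) x t * (pdx (pdt φ) x t + pdt ψ x t) + ρ2 * pdt (pdt φ) x t * (pdx (pdx (pdt φ)) x t + pdx (pdt ψ) x t) + α * pdx (pdt ψ) x t * pdx ψ x t + α * pdt ψ x t * pdx (pdx ψ) x t + ξ1 * pdx (pdt ψ) x t * θ x t + ξ1 * pdt ψ x t * pdx θ x t + ξ2 * pdx (pdt ψ) x t * P x t + ξ2 * pdt ψ x t * pdx P x t + κ * pdx θ x t * pdx θ x t + κ * θ x t * pdx (pdx θ) x t + h * pdx P x t * pdx P x t + h * P x t * pdx (pdx P) x t) - 2 * κ * (pdx θ x t) ^ 2 - 2 * h * (pdx P x t) ^ 2) := by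
      apply intervalIntegral.integral_congr_ae
      filter_upwards [hLne] with x hxL hxmem
      rw [Set.uIoc_of_le hL.le] at hxmem
      exact hpoint x ⟨hxmem.1, lt_of_le_of_ne hxmem.2 hxL⟩
    have hval : (1/2) * (∫ x in (0:ℝ)..L, pdt (fun x t => ρ1 * (pdt φ x t) ^ 2 + (ρ1 * ρ2 / κ) * (pdt (pdt φ) x t) ^ 2 + ρ2 * (pdx (pdt φ) x t) ^ 2 + κ * (pdx φ x t + ψ x t) ^ 2 + α * (pdx ψ x t) ^ 2 + c * (θ x t) ^ 2 + r * (P x t) ^ 2 + 2 * d * (θ x t) * (P x t)) x t)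
        = -(κ * ∫ x in (0:ℝ)..L, (pdx θ x t) ^ 2) - h * ∫ x in (0:ℝ)..L, (pdx P x t) ^ 2 := by
      rw [s1, s2,
        intervalIntegral.integral_sub ((hDBint.const_mul 2).sub (hθxint.const_mul (2 * κ)))
          (hPxint.const_mul (2 * h)),
        intervalIntegral.integral_sub (hDBint.const_mul 2) (hθxint.const_mul (2 * κ)),
        intervalIntegral.integral_const_mul, intervalIntegral.integral_const_mul,
        intervalIntegral.integral_const_mul, hBeval]
      ring
    rwa [hval] at h0
  -- continuity facts
  have hEdiff : Differentiable ℝ (energy L ρ1 ρ2 κ α c r d φ ψ θ P) :=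
    fun u => (hEd u).differentiableAt
  have hSmθx2 : Sm (fun x t => (pdx θ x t) ^ 2) := by
    show ContDiff ℝ (⊤ : ℕ∞) (fun p : ℝ × ℝ => (pdx θ p.1 p.2) ^ 2)
    have u1 : ContDiff ℝ (⊤ : ℕ∞) (fun p : ℝ × ℝ => pdx θ p.1 p.2) := hθx
    fun_prop
  have hSmPx2 : Sm (fun x t => (pdx P x t) ^ 2) := by
    show ContDiff ℝ (⊤ : ℕ∞) (fun p : ℝ × ℝ => (pdx P p.1 p.2) ^ 2)
    have u1 : ContDiff ℝ (⊤ : ℕ∞) (fun p : ℝ × ℝ => pdx P p.1 p.2) := hPx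
    fun_prop
  have hΘcont : Continuous (fun s => ∫ x in (0:ℝ)..L, (pdx θ x s) ^ 2) := by
    have : Differentiable ℝ (fun s => ∫ x in (0:ℝ)..L, (pdx θ x s) ^ 2) :=
      fun u => (hasDerivAt_paramInt hSmθx2 0 L u).differentiableAt
    exact this.continuous
  have hPIcont : Continuous (fun s => ∫ x in (0:ℝ)..L, (pdx P x s) ^ 2) := by
    have : Differentiable ℝ (fun s => ∫ x in (0:ℝ)..L, (pdx P x s) ^ 2) :=
      fun u => (hasDerivAt_paramInt hSmPx2 0 L u).differentiableAt
    exact this.continuous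
  have hGcont : Continuous (fun s => -(κ * ∫ x in (0:ℝ)..L, (pdx θ x s) ^ 2)
      - h * ∫ x in (0:ℝ)..L, (pdx P x s) ^ 2) :=
    ((continuous_const.mul hΘcont).neg).sub (continuous_const.mul hPIcont)
  -- main identity
  have hmain : ∀ t ≥ (0:ℝ),
      energy L ρ1 ρ2 κ α c r d φ ψ θ P t - energy L ρ1 ρ2 κ α c r d φ ψ θ P 0 =
        -(κ * ∫ s in (0:ℝ)..t, ∫ x in (0:ℝ)..L, (pdx θ x s) ^ 2)
          - h * ∫ s in (0:ℝ)..t, ∫ x in (0:ℝ)..L, (pdx P x s) ^ 2 := by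
    intro t ht0
    rcases ht0.lt_or_eq with hpos | heq0
    · have hftc := intervalIntegral.integral_eq_sub_of_hasDerivAt_of_le hpos.le
        hEdiff.continuous.continuousOn (fun s hs => hEd' s hs.1)
        (hGcont.intervalIntegrable 0 t)
      rw [← hftc,
        intervalIntegral.integral_sub ((show Continuous fun s => -(κ * ∫ x in (0:ℝ)..L, (pdx θ x s) ^ 2) from (continuous_const.mul hΘcont).neg).intervalIntegrable 0 t)
          ((show Continuous fun s => h * ∫ x in (0:ℝ)..L, (pdx P x s) ^ 2 from continuous_const.mul hPIcont).intervalIntegrable 0 t),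
        intervalIntegral.integral_neg, intervalIntegral.integral_const_mul,
        intervalIntegral.integral_const_mul]
    · rw [← heq0]
      simp
  refine ⟨hmain, ?_⟩
  intro s t hs hst
  have ht0 : (0:ℝ) ≤ t := hs.trans hst
  have e1 := hmain t ht0
  have e2 := hmain s hs
  have hΘsub : (∫ u in (0:ℝ)..t, ∫ x in (0:ℝ)..L, (pdx θ x u) ^ 2)
      - (∫ u in (0:ℝ)..s, ∫ x in (0:ℝ)..L, (pdx θ x u) ^ 2)
      = ∫ u in s..t, ∫ x in (0:ℝ)..L, (pdx θ x u) ^ 2 :=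
    intervalIntegral.integral_interval_sub_left (hΘcont.intervalIntegrable 0 t)
      (hΘcont.intervalIntegrable 0 s)
  have hPIsub : (∫ u in (0:ℝ)..t, ∫ x in (0:ℝ)..L, (pdx P x u) ^ 2)
      - (∫ u in (0:ℝ)..s, ∫ x in (0:ℝ)..L, (pdx P x u) ^ 2)
      = ∫ u in s..t, ∫ x in (0:ℝ)..L, (pdx P x u) ^ 2 :=
    intervalIntegral.integral_interval_sub_left (hPIcont.intervalIntegrable 0 t)
      (hPIcont.intervalIntegrable 0 s)
  have hΘnn : 0 ≤ ∫ u in s..t, ∫ x in (0:ℝ)..L, (pdx θ x u) ^ 2 :=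
    intervalIntegral.integral_nonneg hst
      (fun u _ => intervalIntegral.integral_nonneg hL.le (fun x _ => sq_nonneg _))
  have hPInn : 0 ≤ ∫ u in s..t, ∫ x in (0:ℝ)..L, (pdx P x u) ^ 2 :=
    intervalIntegral.integral_nonneg hst
      (fun u _ => intervalIntegral.integral_nonneg hL.le (fun x _ => sq_nonneg _))
  have k1 : κ * ((∫ u in (0:ℝ)..t, ∫ x in (0:ℝ)..L, (pdx θ x u) ^ 2)
      - (∫ u in (0:ℝ)..s, ∫ x in (0:ℝ)..L, (pdx θ x u) ^ 2))
      = κ * ∫ u in s..t, ∫ x in (0:ℝ)..L, (pdx θ x u) ^ 2 := by rw [hΘsub]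
  have k2 : h * ((∫ u in (0:ℝ)..t, ∫ x in (0:ℝ)..L, (pdx P x u) ^ 2)
      - (∫ u in (0:ℝ)..s, ∫ x in (0:ℝ)..L, (pdx P x u) ^ 2))
      = h * ∫ u in s..t, ∫ x in (0:ℝ)..L, (pdx P x u) ^ 2 := by rw [hPIsub]
  have k3 : 0 ≤ κ * ∫ u in s..t, ∫ x in (0:ℝ)..L, (pdx θ x u) ^ 2 := mul_nonneg hκ.le hΘnn
  have k4 : 0 ≤ h * ∫ u in s..t, ∫ x in (0:ℝ)..L, (pdx P x u) ^ 2 := mul_nonneg hh.le hPInn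
  nlinarith [e1, e2, k1, k2, k3, k4]
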